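/- arXiv:math/0509663 — 2 statements merged into one kernel-verified Lean document; each statement's English description precedes it below -/
import Mathlib

section
/- Let Γ be a self-adjoint, positive, unbounded operator with discrete spectrum on a separable Hilbert space H, and let L be a self-adjoint operator with ‖Lψ‖ ≤ C‖ψ‖_1 for all ψ ∈ H^1(Γ). Suppose φ_0 ∈ H^1(Γ) with ‖φ_0‖ = 1 is an eigenvector of L corresponding to an eigenvalue E. Then for τ = (2‖φ_0‖_1²)^{-1}, the solution φ^A of dφ^A/dt = iAL φ^A − Γ φ^A, φ^A(0) = φ_0, satisfies ‖φ^A(τ)‖ ≥ 1/2 for every A ∈ ℝ. -/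
/-!
With `a = ‖φ₀‖₁`, let `g(t) = e^{-iAEt} ⟪φ₀, φ(t)⟫`. Since `φ₀` is an eigenvector of the
symmetric `L`, the `L`-part of the equation drops out of `g' = -e^{-iAEt} ⟪φ₀, Γφ(t)⟫`, so
`|g'| ≤ a ‖φ(t)‖₁`, while `d/dt ‖φ(t)‖² = -2 ‖φ(t)‖₁²`. By AM–GM the function
`Re g(t) + a² t / 2 - ‖φ(t)‖² / 4` is nondecreasing; comparing its values `3/4` at `0` and at most
`‖φ(τ)‖ + 1/4 - ‖φ(τ)‖² / 4` at `τ` gives `‖φ(τ)‖ ≥ 2 - √2 > 1/2`.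
-/

open MeasureTheory Filter Set
open scoped InnerProductSpace ENNReal

noncomputable section

variable {H : Type*} [NormedAddCommGroup H] [InnerProductSpace ℂ H] [CompleteSpace H]

/-- The spectral data of a self-adjoint, positive, unbounded operator `Γ` with discrete
spectrum on a separable Hilbert space `H`: the eigenvalues `0 < λ 0 ≤ λ 1 ≤ ⋯ → ∞`
together with an orthonormal (Hilbert) basis of corresponding eigenvectors. -/
structure DiscreteSpectralOp (H : Type*) [NormedAddCommGroup H]
    [InnerProductSpace ℂ H] [CompleteSpace H] where
  /-- the orthonormal eigenbasis of `Γ` -/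
  e : HilbertBasis ℕ ℂ H
  /-- the eigenvalues of `Γ` -/
  lam : ℕ → ℝ
  lam_pos : ∀ n, 0 < lam n
  lam_mono : Monotone lam
  lam_top : Tendsto lam atTop atTop

namespace DiscreteSpectralOp

variable (Γ : DiscreteSpectralOp H)

/-- the coefficients of `ψ` in the eigenbasis of `Γ` -/
def coeff (ψ : H) (n : ℕ) : ℂ := Γ.e.repr ψ n

/-- membership in the (homogeneous) Sobolev space `H^m(Γ)`:
`∑ λ_n^m |c_n|² < ∞` -/
def MemHs (m : ℝ) (ψ : H) : Prop :=
  Summable fun n => Γ.lam n ^ m * ‖Γ.coeff ψ n‖ ^ 2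

/-- the Sobolev norm `‖ψ‖_{H^m(Γ)} = (∑ λ_n^m |c_n|²)^{1/2}` -/
def snorm (m : ℝ) (ψ : H) : ℝ :=
  Real.sqrt (∑' n, Γ.lam n ^ m * ‖Γ.coeff ψ n‖ ^ 2)

/-- the operator `Γ` itself, `Γψ = ∑ λ_n c_n e_n` (junk value off its domain `H²(Γ)`) -/
def apply (ψ : H) : H := ∑' n, ((Γ.lam n : ℂ) * Γ.coeff ψ n) • (Γ.e n : H)

/-- the orthogonal projection `P_N` onto the span of the first `N` eigenvectors of `Γ` -/
def projN (N : ℕ) (ψ : H) : H := ∑ n ∈ Finset.range N, Γ.coeff ψ n • (Γ.e n : H)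

end DiscreteSpectralOp

/-- `φ` solves the Bochner differential equation `dφ/dt = iAL φ − Γ φ`, `φ(0) = φ₀`. -/
def IsHeatSolution (Γ : DiscreteSpectralOp H) (L : H →ₗ[ℂ] H) (A : ℝ) (φ₀ : H)
    (φ : ℝ → H) : Prop :=
  φ 0 = φ₀ ∧ ContinuousOn φ (Ici 0) ∧
    ∀ t : ℝ, 0 < t → Γ.MemHs 2 (φ t) ∧
      HasDerivAt φ ((A : ℂ) • (Complex.I • L (φ t)) - Γ.apply (φ t)) t

theorem re_sub_quarter_le_of_hasDerivAt {g g' : ℝ → ℂ} {n b : ℝ → ℝ} {a T : ℝ} (hT : 0 ≤ T)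
    (hgc : ContinuousOn g (Icc 0 T)) (hnc : ContinuousOn n (Icc 0 T))
    (hg : ∀ t ∈ Ioo 0 T, HasDerivAt g (g' t) t) (hg' : ∀ t ∈ Ioo 0 T, ‖g' t‖ ≤ a * b t)
    (hn : ∀ t ∈ Ioo 0 T, HasDerivAt n (-(2 * b t ^ 2)) t) :
    (g 0).re - n 0 / 4 ≤ (g T).re + a ^ 2 / 2 * T - n T / 4 := by
  set F : ℝ → ℝ := fun t => (g t).re + a ^ 2 / 2 * t - n t / 4
  have hmono : MonotoneOn F (Icc 0 T) := by
    refine monotoneOn_of_hasDerivWithinAt_nonneg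
      (f' := fun t => (g' t).re + a ^ 2 / 2 + b t ^ 2 / 2) (convex_Icc 0 T) ?_ ?_ ?_
    · exact ((Complex.continuous_re.comp_continuousOn hgc).add (by fun_prop)).sub
        (hnc.div_const 4)
    all_goals intro t ht; simp only [interior_Icc] at ht ⊢
    · have hre : HasDerivAt (fun s => (g s).re) (g' t).re t :=
        Complex.reCLM.hasFDerivAt.comp_hasDerivAt t (hg t ht)
      have hF : HasDerivAt F ((g' t).re + a ^ 2 / 2 * 1 - -(2 * b t ^ 2) / 4) t :=
        (hre.add ((hasDerivAt_id t).const_mul _)).sub ((hn t ht).div_const 4)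
      exact (hF.congr_deriv (by ring)).hasDerivWithinAt
    · have := Complex.abs_re_le_norm (g' t)
      have := neg_abs_le (g' t).re
      nlinarith [sq_nonneg (a - b t), hg' t ht]
  simpa [F] using hmono (left_mem_Icc.2 hT) (right_mem_Icc.2 hT) hT

open scoped lp

namespace DiscreteSpectralOp

variable (Γ : DiscreteSpectralOp H)

theorem memℓp_ofReal_mul_coeff {w : ℕ → ℝ} {ψ : H}
    (h : Summable fun n => w n ^ 2 * ‖Γ.coeff ψ n‖ ^ 2) :
    Memℓp (fun n => (w n : ℂ) * Γ.coeff ψ n) 2 :=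
  memℓp_gen (by simpa [norm_mul, mul_pow] using h)

variable {Γ}

theorem memHs_one_of_memHs_two {ψ : H} (h : Γ.MemHs 2 ψ) : Γ.MemHs 1 ψ := by
  refine (h.mul_left (Γ.lam 0)⁻¹).of_nonneg_of_le
    (fun n => mul_nonneg (Real.rpow_nonneg (Γ.lam_pos n).le _) (sq_nonneg _)) fun n => ?_
  have h0 := Γ.lam_pos 0
  have hn := Γ.lam_pos n
  have hle : 1 ≤ (Γ.lam 0)⁻¹ * Γ.lam n := (one_le_inv_mul₀ h0).2 (Γ.lam_mono n.zero_le)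
  rw [Real.rpow_one, Real.rpow_two]
  nlinarith [mul_nonneg hn.le (sq_nonneg ‖Γ.coeff ψ n‖)]

theorem hasSum_apply {ψ : H} (h : Γ.MemHs 2 ψ) :
    HasSum (fun n => ((Γ.lam n : ℂ) * Γ.coeff ψ n) • (Γ.e n : H)) (Γ.apply ψ) := by
  have hℓ := Γ.memℓp_ofReal_mul_coeff (w := Γ.lam) (by simpa [MemHs] using h)
  have hf := Γ.e.hasSum_repr_symm ⟨_, hℓ⟩
  exact (show Γ.apply ψ = _ from hf.tsum_eq) ▸ hf

theorem hasSum_inner_apply (χ : H) {ψ : H} (h : Γ.MemHs 2 ψ) :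
    HasSum (fun n => starRingEnd ℂ (Γ.coeff χ n) * ((Γ.lam n : ℂ) * Γ.coeff ψ n))
      ⟪χ, Γ.apply ψ⟫_ℂ := by
  have hf := (hasSum_apply h).mapL (innerSL ℂ χ)
  simp only [innerSL_apply_apply, inner_smul_right] at hf
  have hterm : ∀ n, (Γ.lam n : ℂ) * Γ.coeff ψ n * ⟪χ, (Γ.e n : H)⟫_ℂ
      = starRingEnd ℂ (Γ.coeff χ n) * ((Γ.lam n : ℂ) * Γ.coeff ψ n) := fun n => by
    simp only [coeff, HilbertBasis.repr_apply_apply, inner_conj_symm]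
    ring
  simpa only [hterm] using hf

/-- The coordinates of `Γ^{1/2} ψ` in the eigenbasis. -/
def sqrtLamCoeff {ψ : H} (h : Γ.MemHs 1 ψ) : ℓ²(ℕ, ℂ) :=
  ⟨_, Γ.memℓp_ofReal_mul_coeff (w := fun n => √(Γ.lam n))
    (by simpa [Real.sq_sqrt (Γ.lam_pos _).le, MemHs] using h)⟩

theorem norm_sqrtLamCoeff {ψ : H} (h : Γ.MemHs 1 ψ) : ‖sqrtLamCoeff h‖ = Γ.snorm 1 ψ := by
  rw [lp.norm_eq_tsum_rpow (by norm_num), snorm, Real.sqrt_eq_rpow]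
  simp [sqrtLamCoeff, mul_pow, Real.sq_sqrt (Γ.lam_pos _).le]

theorem inner_sqrtLamCoeff {χ ψ : H} (hχ : Γ.MemHs 1 χ) (hψ : Γ.MemHs 2 ψ) :
    ⟪sqrtLamCoeff hχ, sqrtLamCoeff (memHs_one_of_memHs_two hψ)⟫_ℂ = ⟪χ, Γ.apply ψ⟫_ℂ := by
  rw [lp.inner_eq_tsum, ← (hasSum_inner_apply χ hψ).tsum_eq]
  refine tsum_congr fun n => ?_
  have hsq : (√(Γ.lam n) : ℂ) * √(Γ.lam n) = Γ.lam n := by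
    rw [← Complex.ofReal_mul, Real.mul_self_sqrt (Γ.lam_pos n).le]
  simp only [sqrtLamCoeff, RCLike.inner_apply', map_mul, Complex.conj_ofReal]
  linear_combination starRingEnd ℂ (Γ.coeff χ n) * Γ.coeff ψ n * hsq

theorem norm_inner_apply_le {χ ψ : H} (hχ : Γ.MemHs 1 χ) (hψ : Γ.MemHs 2 ψ) :
    ‖⟪χ, Γ.apply ψ⟫_ℂ‖ ≤ Γ.snorm 1 χ * Γ.snorm 1 ψ := by
  rw [← inner_sqrtLamCoeff hχ hψ, ← norm_sqrtLamCoeff hχ,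
    ← norm_sqrtLamCoeff (memHs_one_of_memHs_two hψ)]
  exact norm_inner_le_norm _ _

theorem inner_apply_self {ψ : H} (hψ : Γ.MemHs 2 ψ) :
    ⟪ψ, Γ.apply ψ⟫_ℂ = (Γ.snorm 1 ψ ^ 2 : ℝ) := by
  rw [← inner_sqrtLamCoeff (memHs_one_of_memHs_two hψ) hψ, inner_self_eq_norm_sq_to_K,
    norm_sqrtLamCoeff]
  norm_cast

end DiscreteSpectralOp

theorem DiscreteSpectralOp.re_inner_smul_I_sub_apply_self (Γ : DiscreteSpectralOp H)
    {L : H →ₗ[ℂ] H} {ψ : H} (hψ : Γ.MemHs 2 ψ) (hL : ⟪L ψ, ψ⟫_ℂ = ⟪ψ, L ψ⟫_ℂ) (A : ℝ) :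
    (⟪ψ, (A : ℂ) • (Complex.I • L ψ) - Γ.apply ψ⟫_ℂ).re = -Γ.snorm 1 ψ ^ 2 := by
  have hreal : (⟪ψ, L ψ⟫_ℂ).im = 0 :=
    Complex.conj_eq_iff_im.1 (by rw [inner_conj_symm, hL])
  rw [inner_sub_right, inner_smul_right, inner_smul_right, Γ.inner_apply_self hψ]
  simp [Complex.mul_re, hreal, -Complex.ofReal_pow]

namespace IsHeatSolution

variable {Γ : DiscreteSpectralOp H} {L : H →ₗ[ℂ] H} {A : ℝ} {φ₀ : H} {φ : ℝ → H} {t : ℝ}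

theorem hasDerivAt_norm_sq
    (hsym : ∀ ψ χ : H, Γ.MemHs 1 ψ → Γ.MemHs 1 χ → ⟪L ψ, χ⟫_ℂ = ⟪ψ, L χ⟫_ℂ)
    (hφ : IsHeatSolution Γ L A φ₀ φ) (ht : 0 < t) :
    HasDerivAt (fun s => ‖φ s‖ ^ 2) (-(2 * Γ.snorm 1 (φ t) ^ 2)) t := by
  obtain ⟨hmem, hderiv⟩ := hφ.2.2 t ht
  have hmem1 := DiscreteSpectralOp.memHs_one_of_memHs_two hmem
  let _ := InnerProductSpace.rclikeToReal ℂ H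
  convert hderiv.norm_sq using 1
  rw [real_inner_eq_re_inner, RCLike.re_to_complex,
    Γ.re_inner_smul_I_sub_apply_self hmem (hsym _ _ hmem1 hmem1)]
  ring

theorem hasDerivAt_phase_mul_inner
    (hsym : ∀ ψ χ : H, Γ.MemHs 1 ψ → Γ.MemHs 1 χ → ⟪L ψ, χ⟫_ℂ = ⟪ψ, L χ⟫_ℂ)
    {χ : H} (hχ : Γ.MemHs 1 χ) {E : ℝ} (heig : L χ = (E : ℂ) • χ)
    (hφ : IsHeatSolution Γ L A φ₀ φ) (ht : 0 < t) :
    HasDerivAt (fun s : ℝ => Complex.exp (↑(-(A * E * s)) * Complex.I) * ⟪χ, φ s⟫_ℂ)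
      (-(Complex.exp (↑(-(A * E * t)) * Complex.I) * ⟪χ, Γ.apply (φ t)⟫_ℂ)) t := by
  obtain ⟨hmem, hderiv⟩ := hφ.2.2 t ht
  have hLχ : ⟪χ, L (φ t)⟫_ℂ = E * ⟪χ, φ t⟫_ℂ := by
    rw [← hsym _ _ hχ (DiscreteSpectralOp.memHs_one_of_memHs_two hmem), heig, inner_smul_left,
      Complex.conj_ofReal]
  have hphase := (((hasDerivAt_id' t).const_mul (A * E)).neg.ofReal_comp.mul_const
    Complex.I).cexp
  have hinner := (hasDerivAt_const t χ).inner ℂ hderiv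
  refine (hphase.mul hinner).congr_deriv ?_
  rw [inner_zero_left, add_zero, inner_sub_right, inner_smul_right, inner_smul_right, hLχ]
  simp only [Pi.neg_apply]
  push_cast
  ring

end IsHeatSolution

theorem no_enhanced_relaxation_of_H1_eigenvector_general
    (Γ : DiscreteSpectralOp H) (L : H →ₗ[ℂ] H)
    -- `L` is symmetric on `H¹(Γ)` and satisfies `‖Lψ‖ ≤ C‖ψ‖₁`:
    (hsym : ∀ ψ χ : H, Γ.MemHs 1 ψ → Γ.MemHs 1 χ → ⟪L ψ, χ⟫_ℂ = ⟪ψ, L χ⟫_ℂ)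
    (φ₀ : H) (hφ₀ : Γ.MemHs 1 φ₀) (hnorm : ‖φ₀‖ = 1)
    (E : ℝ) (heig : L φ₀ = (E : ℂ) • φ₀)
    (A : ℝ) (φ : ℝ → H) (hφ : IsHeatSolution Γ L A φ₀ φ) :
    1 / 2 ≤ ‖φ ((2 * Γ.snorm 1 φ₀ ^ 2)⁻¹)‖ := by
  set a := Γ.snorm 1 φ₀
  set τ := (2 * a ^ 2)⁻¹
  have hτ : 0 ≤ τ := by positivity
  have haτ : a ^ 2 / 2 * τ ≤ 1 / 4 := by
    have : 2 * a ^ 2 * τ ≤ 1 := mul_inv_le_one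
    linarith
  have hφc : ContinuousOn φ (Icc 0 τ) := hφ.2.1.mono Icc_subset_Ici_self
  have hphase (s : ℝ) : ‖Complex.exp (↑(-(A * E * s)) * Complex.I)‖ = 1 :=
    Complex.norm_exp_ofReal_mul_I _
  have key := re_sub_quarter_le_of_hasDerivAt
    (g := fun s => Complex.exp (↑(-(A * E * s)) * Complex.I) * ⟪φ₀, φ s⟫_ℂ)
    (n := fun s => ‖φ s‖ ^ 2) (b := fun s => Γ.snorm 1 (φ s)) (a := a) hτ
    ((by fun_prop : Continuous _).continuousOn.mul (continuousOn_const.inner hφc))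
    (hφc.norm.pow 2) (fun t ht => hφ.hasDerivAt_phase_mul_inner hsym hφ₀ heig ht.1)
    (fun t ht => by
      rw [norm_neg, norm_mul, hphase, one_mul]
      exact Γ.norm_inner_apply_le hφ₀ (hφ.2.2 t ht.1).1)
    (fun t ht => hφ.hasDerivAt_norm_sq hsym ht.1)
  have hg0 : (Complex.exp (↑(-(A * E * 0)) * Complex.I) * ⟪φ₀, φ 0⟫_ℂ).re = 1 := by
    simp [hφ.1, inner_self_eq_norm_sq_to_K, hnorm]
  have hgτ : (Complex.exp (↑(-(A * E * τ)) * Complex.I) * ⟪φ₀, φ τ⟫_ℂ).re ≤ ‖φ τ‖ := by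
    refine (Complex.re_le_norm _).trans ?_
    rw [norm_mul, hphase, one_mul]
    simpa [hnorm] using norm_inner_le_norm (𝕜 := ℂ) φ₀ (φ τ)
  rw [hg0, hφ.1, hnorm] at key
  nlinarith [sq_nonneg ‖φ τ‖]

/-- **(First part of Theorem 1.4.)**  If the initial datum `φ₀ ∈ H¹(Γ)`, `‖φ₀‖ = 1`,
is an eigenvector of the self-adjoint operator `L` with eigenvalue `E`, then the
solution of `dφ/dt = iALφ − Γφ`, `φ(0) = φ₀` satisfies `‖φ(τ)‖ ≥ 1/2` at the time
`τ = (2‖φ₀‖₁²)⁻¹`, uniformly in `A ∈ ℝ`. -/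
theorem no_enhanced_relaxation_of_H1_eigenvector
    (Γ : DiscreteSpectralOp H) (L : H →ₗ[ℂ] H)
    -- `L` is symmetric on `H¹(Γ)` and satisfies `‖Lψ‖ ≤ C‖ψ‖₁`:
    (hsym : ∀ ψ χ : H, Γ.MemHs 1 ψ → Γ.MemHs 1 χ → ⟪L ψ, χ⟫_ℂ = ⟪ψ, L χ⟫_ℂ)
    (C : ℝ) (hL : ∀ ψ : H, Γ.MemHs 1 ψ → ‖L ψ‖ ≤ C * Γ.snorm 1 ψ)
    (φ₀ : H) (hφ₀ : Γ.MemHs 1 φ₀) (hnorm : ‖φ₀‖ = 1)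
    (E : ℝ) (heig : L φ₀ = (E : ℂ) • φ₀)
    (A : ℝ) (φ : ℝ → H) (hφ : IsHeatSolution Γ L A φ₀ φ) :
    1 / 2 ≤ ‖φ ((2 * Γ.snorm 1 φ₀ ^ 2)⁻¹)‖ :=
  no_enhanced_relaxation_of_H1_eigenvector_general Γ L hsym φ₀ hφ₀ hnorm E heig A φ hφ
end
end

section
/- Let L be a half-line Jacobi matrix on ℓ²(ℤ⁺), (Lu)_n = a_n u_{n+1} + a_{n−1} u_{n−1} + v_n u_n for n ≥ 1 with boundary condition u_0 = 0, where a_n > 0, v_n ∈ ℝ, and a_n − 1 ∈ ℓ²(ℤ⁺), v_n ∈ ℓ²(ℤ⁺). Suppose u ∈ ℓ²(ℤ⁺), u ≢ 0, is an eigenfunction of L with eigenvalue E ∈ (−2,2). Then there exists C < ∞ such that lim_{n→∞} (u_n² + u_{n−1}²) e^{C√n} = ∞; in particular u decays slower than e^{−C√n}. -/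
open Filter


lemma abs_mul_half (x y : ℝ) : |x*y| ≤ (x^2+y^2)/2 := by
  rw [abs_mul]
  nlinarith [sq_nonneg (|x| - |y|), sq_abs x, sq_abs y, abs_nonneg x, abs_nonneg y]

lemma exp_le_one_sub {t : ℝ} (h0 : 0 ≤ t) (h1 : t ≤ 1/2) : Real.exp (-(2*t)) ≤ 1 - t := by
  have hprod : Real.exp (-(2*t)) * Real.exp (2*t) = 1 := by
    rw [← Real.exp_add]; simp
  nlinarith [Real.add_one_le_exp (2*t), Real.exp_pos (-(2*t))]

lemma sqrt_nat_tendsto : Tendsto (fun n : ℕ => Real.sqrt n) atTop atTop := by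
  apply tendsto_atTop_atTop.mpr
  intro b
  refine ⟨⌈b^2⌉₊ + 1, fun n hn => ?_⟩
  have h1 : b^2 ≤ (n:ℝ) := by
    calc b^2 ≤ (⌈b^2⌉₊ : ℝ) := Nat.le_ceil _
    _ ≤ n := by exact_mod_cast le_trans (Nat.le_succ _) hn
  calc b ≤ |b| := le_abs_self b
  _ = Real.sqrt (b^2) := (Real.sqrt_sq_eq_abs b).symm
  _ ≤ Real.sqrt n := Real.sqrt_le_sqrt h1

lemma cs_bound (c : ℕ → ℝ) (h0 : ∀ n, 0 ≤ c n) (hsum : Summable fun n => c n^2) (n : ℕ) :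
    ∑ k ∈ Finset.range n, c k ≤ Real.sqrt (∑' k, c k^2) * Real.sqrt n := by
  set T := ∑' k, c k^2 with hT
  have hT0 : 0 ≤ T := tsum_nonneg fun k => sq_nonneg _
  have h1 : (∑ k ∈ Finset.range n, c k)^2 ≤ T * n := by
    have := Finset.sum_mul_sq_le_sq_mul_sq (Finset.range n) c (fun _ => 1)
    simp only [mul_one, one_pow, Finset.sum_const, Finset.card_range, nsmul_eq_mul] at this
    have h2 : ∑ k ∈ Finset.range n, c k ^2 ≤ T :=
      Summable.sum_le_tsum (Finset.range n) (fun i _ => sq_nonneg _) hsum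
    nlinarith [Nat.cast_nonneg (α := ℝ) n]
  have h3 : 0 ≤ ∑ k ∈ Finset.range n, c k := Finset.sum_nonneg fun k _ => h0 k
  calc ∑ k ∈ Finset.range n, c k = Real.sqrt ((∑ k ∈ Finset.range n, c k)^2) :=
        (Real.sqrt_sq h3).symm
  _ ≤ Real.sqrt (T * n) := Real.sqrt_le_sqrt h1
  _ = Real.sqrt T * Real.sqrt n := Real.sqrt_mul hT0 _

lemma step_bound (E aN aM vN x y z c : ℝ)
    (hE : |E| ≤ 2)
    (hb1 : |aN - 1| ≤ c) (hb2 : |aM - 1| ≤ c) (hb3 : |vN| ≤ c)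
    (hc : c ≤ 1/4)
    (hrec : E * x = aN * z + aM * y + vN * x) :
    |(z^2 + x^2 - E*(z*x)) - (x^2 + y^2 - E*(x*y))| ≤ 32 * c * (x^2 + y^2) := by
  have hc0 : 0 ≤ c := (abs_nonneg vN).trans hb3
  set d : ℝ := z - E*x + y with hd
  have hid : (z^2 + x^2 - E*(z*x)) - (x^2 + y^2 - E*(x*y)) = d * (z - y) := by
    rw [hd]; ring
  have hd2 : d = (1-aN)*z + (1-aM)*y + (-vN)*x := by rw [hd]; linarith [hrec]
  -- bounds on coefficients
  have hb1' := abs_le.1 (hb1.trans hc)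
  have hb2' := abs_le.1 (hb2.trans hc)
  have hb3' := abs_le.1 (hb3.trans hc)
  have haN : (3:ℝ)/4 ≤ aN := by linarith
  have haM : |aM| ≤ 5/4 := by rw [abs_le]; constructor <;> linarith
  -- bound |z|
  have hz3 : |z| ≤ 3*(|x| + |y|) := by
    have h1 : aN * z = E*x + (-aM)*y + (-vN)*x := by linarith [hrec]
    have h2 : |aN * z| ≤ |E| * |x| + |aM| * |y| + |vN| * |x| := by
      rw [h1]
      calc |E*x + (-aM)*y + (-vN)*x| ≤ |E*x| + |(-aM)*y| + |(-vN)*x| := abs_add_three _ _ _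
      _ = |E| * |x| + |aM| * |y| + |vN| * |x| := by rw [abs_mul, abs_mul, abs_mul, abs_neg, abs_neg]
    have h3 : aN * |z| = |aN * z| := by
      rw [abs_mul, abs_of_pos (by linarith : (0:ℝ) < aN)]
    have h4 : |vN| ≤ 1/4 := hb3.trans hc
    linarith [abs_nonneg x, abs_nonneg y, abs_nonneg z,
      mul_le_mul_of_nonneg_right hE (abs_nonneg x),
      mul_le_mul_of_nonneg_right haM (abs_nonneg y),
      mul_le_mul_of_nonneg_right h4 (abs_nonneg x),
      mul_nonneg (by linarith : (0:ℝ) ≤ aN - 3/4) (abs_nonneg z)]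
  have hdb : |d| ≤ 4*c*(|x|+|y|) := by
    have h2 : |d| ≤ |1-aN| * |z| + |1-aM| * |y| + |vN| * |x| := by
      rw [hd2]
      calc |(1-aN)*z + (1-aM)*y + (-vN)*x| ≤ |(1-aN)*z| + |(1-aM)*y| + |(-vN)*x| :=
            abs_add_three _ _ _
      _ = |1-aN| * |z| + |1-aM| * |y| + |vN| * |x| := by rw [abs_mul, abs_mul, abs_mul, abs_neg]
    have e1 : |1-aN| ≤ c := by rwa [abs_sub_comm] at hb1
    have e2 : |1-aM| ≤ c := by rwa [abs_sub_comm] at hb2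
    linarith [abs_nonneg x, abs_nonneg y, abs_nonneg z,
      mul_le_mul_of_nonneg_right e1 (abs_nonneg z),
      mul_le_mul_of_nonneg_right e2 (abs_nonneg y),
      mul_le_mul_of_nonneg_right hb3 (abs_nonneg x),
      mul_le_mul_of_nonneg_left hz3 hc0]
  have hzy : |z - y| ≤ 4*(|x|+|y|) := by
    calc |z - y| ≤ |z| + |y| := abs_sub _ _
    _ ≤ 4*(|x|+|y|) := by linarith [abs_nonneg x]
  rw [hid, abs_mul]
  have hmain : |d| * |z - y| ≤ (4*c*(|x|+|y|)) * (4*(|x|+|y|)) :=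
    mul_le_mul hdb hzy (abs_nonneg _) (by positivity)
  rw [show (32:ℝ) * c * (x^2+y^2) = 32 * c * (|x|^2 + |y|^2) by rw [sq_abs, sq_abs]]
  nlinarith [hmain, mul_nonneg hc0 (sq_nonneg (|x| - |y|))]

lemma jacobi_zero (a v u : ℕ → ℝ) (ha : ∀ n, 0 < a n) (E : ℝ)
    (heig : ∀ n : ℕ, 1 ≤ n → E * u n = a n * u (n + 1) + a (n - 1) * u (n - 1) + v n * u n)
    (m : ℕ) (h1 : u m = 0) (h2 : u (m+1) = 0) : ∀ k, u k = 0 := by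
  have fwd : ∀ j, u (m+j) = 0 ∧ u (m+j+1) = 0 := by
    intro j
    induction j with
    | zero => exact ⟨h1, h2⟩
    | succ j ih =>
      obtain ⟨e1, e2⟩ := ih
      have hr := heig (m+j+1) (Nat.le_add_left 1 (m+j))
      simp only [Nat.add_sub_cancel] at hr
      rw [e1, e2] at hr
      have : a (m+j+1) * u (m+j+1+1) = 0 := by linarith
      have h3 : u (m+j+1+1) = 0 := by
        rcases mul_eq_zero.1 this with h | h
        · exact absurd h (ne_of_gt (ha _))
        · exact h
      exact ⟨e2, h3⟩
  have bwd : ∀ j, u (m-j) = 0 ∧ u (m-j+1) = 0 := by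
    intro j
    induction j with
    | zero => exact ⟨h1, h2⟩
    | succ j ih =>
      obtain ⟨e1, e2⟩ := ih
      by_cases hj : m ≤ j
      · have : m - (j+1) = m - j := by omega
        rw [this]; exact ⟨e1, e2⟩
      · set k := m - (j+1) with hk
        have hmj : m - j = k + 1 := by omega
        rw [hmj] at e1 e2
        have hr := heig (k+1) (Nat.le_add_left 1 k)
        simp only [Nat.add_sub_cancel] at hr
        rw [e1, e2] at hr
        have : a k * u k = 0 := by linarith
        have h3 : u k = 0 := by
          rcases mul_eq_zero.1 this with h | h
          · exact absurd h (ne_of_gt (ha _))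
          · exact h
        exact ⟨h3, e1⟩
  intro k
  rcases le_total k m with h | h
  · have := (bwd (m-k)).1
    rwa [Nat.sub_sub_self h] at this
  · have := (fwd (k-m)).1
    rwa [Nat.add_sub_cancel' h] at this


/-- **Slow decay of eigenfunctions of ℓ²-perturbations of the free Jacobi matrix.**
Let `L` be the half-line Jacobi matrix `(Lu)_n = a_n u_{n+1} + a_{n-1} u_{n-1} + v_n u_n`
(`n ≥ 1`), with boundary condition `u_0 = 0`, where `a_n > 0`, `v_n ∈ ℝ` and
`a_n − 1, v_n ∈ ℓ²`.  If `u ∈ ℓ²`, `u ≢ 0`, is an eigenfunction of `L` with eigenvalue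
`E ∈ (−2,2)`, then for some `C < ∞` one has `(u_n² + u_{n−1}²) e^{C√n} → ∞`;
in particular `u` decays slower than `e^{−C√n}`. -/
theorem jacobi_eigenfunction_slow_decay
    (a v u : ℕ → ℝ)
    (ha_pos : ∀ n, 0 < a n)
    (ha_l2 : Summable fun n => (a n - 1) ^ 2)
    (hv_l2 : Summable fun n => (v n) ^ 2)
    (hu_l2 : Summable fun n => (u n) ^ 2)
    (hu_ne : u ≠ 0)
    (hbc : u 0 = 0)
    (E : ℝ) (hE : E ∈ Set.Ioo (-2 : ℝ) 2)
    (heig : ∀ n : ℕ, 1 ≤ n → E * u n = a n * u (n + 1) + a (n - 1) * u (n - 1) + v n * u n) :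
    ∃ C : ℝ, Tendsto (fun n : ℕ => ((u n) ^ 2 + (u (n - 1)) ^ 2) * Real.exp (C * Real.sqrt n))
      atTop atTop := by
  obtain ⟨hE1, hE2⟩ := hE
  have habs : |E| < 2 := abs_lt.2 ⟨hE1, hE2⟩
  have habs2 : |E| ≤ 2 := habs.le
  obtain ⟨δ, hδdef⟩ : ∃ x : ℝ, x = (2 - |E|)/2 := ⟨_, rfl⟩
  have hδ : 0 < δ := by rw [hδdef]; linarith
  obtain ⟨S, hSdef⟩ : ∃ S : ℕ → ℝ, S = fun n => u n ^ 2 + u (n-1) ^ 2 := ⟨_, rfl⟩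
  obtain ⟨R, hRdef⟩ : ∃ R : ℕ → ℝ, R = fun n => u n ^ 2 + u (n-1) ^ 2 - E * (u n * u (n-1)) := ⟨_, rfl⟩
  have hS0 : ∀ n, 0 ≤ S n := fun n => by simp only [hSdef]; positivity
  have habsE : ∀ n, E * (u n * u (n-1)) ≤ |E| * ((u n ^ 2 + u (n-1) ^ 2)/2) := by
    intro n
    calc E * (u n * u (n-1)) ≤ |E * (u n * u (n-1))| := le_abs_self _
    _ = |E| * |u n * u (n-1)| := abs_mul _ _
    _ ≤ |E| * ((u n ^ 2 + u (n-1) ^ 2)/2) :=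
        mul_le_mul_of_nonneg_left (abs_mul_half _ _) (abs_nonneg E)
  have habsE' : ∀ n, -(|E| * ((u n ^ 2 + u (n-1) ^ 2)/2)) ≤ E * (u n * u (n-1)) := by
    intro n
    have h1 : |E * (u n * u (n-1))| ≤ |E| * ((u n ^ 2 + u (n-1) ^ 2)/2) := by
      rw [abs_mul]
      exact mul_le_mul_of_nonneg_left (abs_mul_half _ _) (abs_nonneg E)
    linarith [neg_abs_le (E * (u n * u (n-1)))]
  have hRlow : ∀ n, δ * S n ≤ R n := by
    intro n
    simp only [hRdef, hSdef, hδdef]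
    linarith [habsE n]
  have hRup : ∀ n, R n ≤ 2 * S n := by
    intro n
    simp only [hRdef, hSdef]
    nlinarith [habsE' n, habs2, sq_nonneg (u n), sq_nonneg (u (n-1)), abs_nonneg E]
  have hR0 : ∀ n, 0 ≤ R n := fun n => le_trans (mul_nonneg hδ.le (hS0 n)) (hRlow n)
  obtain ⟨c, hcdef⟩ : ∃ c : ℕ → ℝ, c = fun n => |a n - 1| + |a (n-1) - 1| + |v n| := ⟨_, rfl⟩
  have hc0 : ∀ n, 0 ≤ c n := by intro n; simp only [hcdef]; positivity
  have hshift : Summable (fun n => (a (n-1) - 1)^2) :=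
    (summable_nat_add_iff 1).1 (by simpa using ha_l2)
  have hc2 : Summable (fun n => c n ^ 2) := by
    apply Summable.of_nonneg_of_le (fun n => sq_nonneg _) (fun n => ?_)
      (((ha_l2.add hshift).add hv_l2).mul_left 3)
    simp only [hcdef]
    nlinarith [sq_abs (a n - 1), sq_abs (a (n-1) - 1), sq_abs (v n),
      sq_nonneg (|a n - 1| - |a (n-1) - 1|), sq_nonneg (|a n - 1| - |v n|),
      sq_nonneg (|a (n-1) - 1| - |v n|)]
  have hc_tendsto : Tendsto c atTop (nhds 0) := by
    have h1 : Tendsto (fun n => c n ^ 2) atTop (nhds 0) := hc2.tendsto_atTop_zero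
    have h2 : Tendsto (fun n => Real.sqrt (c n ^ 2)) atTop (nhds (Real.sqrt 0)) :=
      (Real.continuous_sqrt.tendsto 0).comp h1
    have h3 : ∀ n, Real.sqrt (c n ^ 2) = c n := fun n => Real.sqrt_sq (hc0 n)
    rw [Real.sqrt_zero] at h2
    simpa only [h3] using h2
  obtain ⟨K, hKdef⟩ : ∃ K : ℝ, K = 32 / δ := ⟨_, rfl⟩
  have hK0 : 0 < K := by rw [hKdef]; positivity
  have hKδ : K * δ = 32 := by rw [hKdef]; exact div_mul_cancel₀ 32 hδ.ne'
  obtain ⟨ε, hεdef⟩ : ∃ x : ℝ, x = min (1/4) (δ/64) := ⟨_, rfl⟩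
  have hε : 0 < ε := by rw [hεdef]; exact lt_min (by norm_num) (by positivity)
  obtain ⟨N0, hN0⟩ := eventually_atTop.1 (hc_tendsto.eventually (gt_mem_nhds hε))
  obtain ⟨N, hNdef⟩ : ∃ N : ℕ, N = max N0 1 := ⟨_, rfl⟩
  have hN1 : 1 ≤ N := by rw [hNdef]; exact le_max_right _ _
  have hN0le : N0 ≤ N := by rw [hNdef]; exact le_max_left _ _
  have hcN : ∀ n, N ≤ n → c n ≤ ε := fun n hn =>
    (hN0 n (le_trans hN0le hn)).le
  -- R N > 0
  have hRN : 0 < R N := by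
    by_contra h
    push_neg at h
    have hSN : S N ≤ 0 := by nlinarith [hRlow N, hS0 N]
    have hSN0 : S N = 0 := le_antisymm hSN (hS0 N)
    simp only [hSdef] at hSN0
    have hq1 : u N = 0 := by
      have : u N ^ 2 = 0 := by nlinarith [sq_nonneg (u (N-1))]
      exact (pow_eq_zero_iff two_ne_zero).1 this
    have hq2 : u (N-1) = 0 := by
      have : u (N-1) ^ 2 = 0 := by nlinarith [sq_nonneg (u N)]
      exact (pow_eq_zero_iff two_ne_zero).1 this
    have hNm : N - 1 + 1 = N := Nat.succ_pred_eq_of_pos hN1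
    have hall := jacobi_zero a v u ha_pos E heig (N-1) hq2 (by rw [hNm]; exact hq1)
    exact hu_ne (funext hall)
  -- one step
  have hstep : ∀ n, N ≤ n → Real.exp (-(2 * (K * c n))) * R n ≤ R (n+1) := by
    intro n hn
    have hcn : c n ≤ ε := hcN n hn
    rw [hεdef] at hcn
    have hb1 : |a n - 1| ≤ c n := by
      simp only [hcdef]; linarith [abs_nonneg (a (n-1) - 1), abs_nonneg (v n)]
    have hb2 : |a (n-1) - 1| ≤ c n := by
      simp only [hcdef]; linarith [abs_nonneg (a n - 1), abs_nonneg (v n)]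
    have hb3 : |v n| ≤ c n := by
      simp only [hcdef]; linarith [abs_nonneg (a n - 1), abs_nonneg (a (n-1) - 1)]
    have hc14 : c n ≤ 1/4 := hcn.trans (min_le_left _ _)
    have hrec := heig n (le_trans hN1 hn)
    have hF := step_bound E (a n) (a (n-1)) (v n) (u n) (u (n-1)) (u (n+1)) (c n)
      habs2 hb1 hb2 hb3 hc14 hrec
    have hRn1 : R (n+1) = u (n+1) ^ 2 + u n ^ 2 - E * (u (n+1) * u n) := by
      simp only [hRdef, Nat.add_sub_cancel]
    have hΔ : -(32 * c n * (u n ^ 2 + u (n-1) ^ 2)) ≤ R (n+1) - R n := by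
      rw [hRn1]
      simp only [hRdef]
      linarith [neg_abs_le ((u (n+1) ^ 2 + u n ^ 2 - E * (u (n+1) * u n)) -
        (u n ^ 2 + u (n-1) ^ 2 - E * (u n * u (n-1)))), hF]
    have hKc : K * c n ≤ 1/2 := by
      have h5 : c n ≤ δ/64 := hcn.trans (min_le_right _ _)
      have h6 : K * c n ≤ K * (δ/64) := mul_le_mul_of_nonneg_left h5 hK0.le
      have h7 : K * (δ/64) = 1/2 := by
        rw [hKdef]; field_simp; norm_num
      linarith
    have hKcR : 32 * (c n * S n) ≤ K * c n * R n := by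
      have e1 : 0 ≤ K * c n * (R n - δ * S n) :=
        mul_nonneg (mul_nonneg hK0.le (hc0 n)) (sub_nonneg.2 (hRlow n))
      have e2 : K * δ * (c n * S n) = 32 * (c n * S n) := by rw [hKδ]
      linarith [e1, e2]
    have h1 : (1 - K * c n) * R n ≤ R (n+1) := by
      have hSn : S n = u n ^ 2 + u (n-1) ^ 2 := by simp only [hSdef]
      rw [hSn] at hKcR
      linarith [hΔ, hKcR]
    have hexp := exp_le_one_sub (mul_nonneg hK0.le (hc0 n)) hKc
    calc Real.exp (-(2 * (K * c n))) * R n ≤ (1 - K * c n) * R n :=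
          mul_le_mul_of_nonneg_right hexp (hR0 n)
    _ ≤ R (n+1) := h1
  -- cumulative bound
  have hcum : ∀ n, N ≤ n →
      R N * Real.exp (-(2 * K * ∑ k ∈ Finset.Ico N n, c k)) ≤ R n := by
    refine Nat.le_induction ?_ ?_
    · simp
    · intro n hn ih
      rw [Finset.sum_Ico_succ_top hn]
      have h2 : Real.exp (-(2 * K * (∑ k ∈ Finset.Ico N n, c k + c n)))
          = Real.exp (-(2 * K * ∑ k ∈ Finset.Ico N n, c k)) * Real.exp (-(2 * (K * c n))) := by
        rw [← Real.exp_add]; congr 1; ring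
      rw [h2, ← mul_assoc]
      calc R N * Real.exp (-(2 * K * ∑ k ∈ Finset.Ico N n, c k)) * Real.exp (-(2 * (K * c n)))
          ≤ R n * Real.exp (-(2 * (K * c n))) :=
            mul_le_mul_of_nonneg_right ih (Real.exp_pos _).le
      _ = Real.exp (-(2 * (K * c n))) * R n := mul_comm _ _
      _ ≤ R (n+1) := hstep n hn
  obtain ⟨T, hTdef⟩ : ∃ x : ℝ, x = ∑' k, c k ^ 2 := ⟨_, rfl⟩
  have hsum_bound : ∀ n : ℕ, ∑ k ∈ Finset.Ico N n, c k ≤ Real.sqrt T * Real.sqrt n := by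
    intro n
    calc ∑ k ∈ Finset.Ico N n, c k ≤ ∑ k ∈ Finset.range n, c k :=
          Finset.sum_le_sum_of_subset_of_nonneg
            (by intro x hx; simp only [Finset.mem_Ico, Finset.mem_range] at *; omega)
            (fun i _ _ => hc0 i)
    _ ≤ Real.sqrt (∑' k, c k ^ 2) * Real.sqrt n := cs_bound c hc0 hc2 n
    _ = Real.sqrt T * Real.sqrt n := by rw [hTdef]
  refine ⟨2 * K * Real.sqrt T + 1, ?_⟩
  have hmono : ∀ n, N ≤ n → R N / 2 * Real.exp (Real.sqrt n)
      ≤ S n * Real.exp ((2 * K * Real.sqrt T + 1) * Real.sqrt n) := by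
    intro n hn
    have h1 : R n ≤ 2 * S n := hRup n
    have h2 := hcum n hn
    have h3 : Real.exp (-(2 * K * (Real.sqrt T * Real.sqrt n)))
        ≤ Real.exp (-(2 * K * ∑ k ∈ Finset.Ico N n, c k)) := by
      apply Real.exp_le_exp.2
      have h3a := mul_le_mul_of_nonneg_left (hsum_bound n) (by positivity : (0:ℝ) ≤ 2 * K)
      linarith
    have h4 : R N * Real.exp (-(2 * K * (Real.sqrt T * Real.sqrt n))) ≤ R n :=
      le_trans (mul_le_mul_of_nonneg_left h3 hRN.le) h2
    have hEpos : (0:ℝ) < Real.exp ((2 * K * Real.sqrt T + 1) * Real.sqrt n) := Real.exp_pos _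
    have h5 : R N * Real.exp (-(2 * K * (Real.sqrt T * Real.sqrt n)))
          * Real.exp ((2 * K * Real.sqrt T + 1) * Real.sqrt n)
        ≤ R n * Real.exp ((2 * K * Real.sqrt T + 1) * Real.sqrt n) :=
      mul_le_mul_of_nonneg_right h4 hEpos.le
    have h6 : Real.exp (-(2 * K * (Real.sqrt T * Real.sqrt n)))
          * Real.exp ((2 * K * Real.sqrt T + 1) * Real.sqrt n) = Real.exp (Real.sqrt n) := by
      rw [← Real.exp_add]; congr 1; ring
    have h7 : R n * Real.exp ((2 * K * Real.sqrt T + 1) * Real.sqrt n)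
        ≤ 2 * S n * Real.exp ((2 * K * Real.sqrt T + 1) * Real.sqrt n) :=
      mul_le_mul_of_nonneg_right h1 hEpos.le
    rw [mul_assoc, h6] at h5
    linarith
  have hfin : Tendsto (fun n : ℕ => R N / 2 * Real.exp (Real.sqrt n)) atTop atTop := by
    have h1 : Tendsto (fun n : ℕ => Real.exp (Real.sqrt n)) atTop atTop :=
      Real.tendsto_exp_atTop.comp sqrt_nat_tendsto
    exact h1.const_mul_atTop (by positivity)
  apply tendsto_atTop_mono' atTop ?_ hfin
  filter_upwards [eventually_ge_atTop N] with n hn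
  simpa only [hSdef] using hmono n hn
end
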